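/- Let Γ be a real symmetric positive-definite 2m×2m matrix with eigenvalues λ₁,…,λ_{2m} and symplectic eigenvalues ν₁,…,ν_m, and let ν_th > 0 with ν_th + ν_k ≥ 1 for all k. Then the Gaussian extractable work W(Γ) = (1/2)∑ₖ(λₖ − ν_th) + ∑ₖ(ν_th − νₖ) satisfies W(Γ) ≤ √(m · Δ) where Δ = ∑_{k=1}^{2m}(λₖ − ν_th)² + 2∑_{k=1}^{m}(νₖ² − ν_th²)². -/

import Mathlib

/-! Bounding each summand by its absolute value gives `W ≤ ½∑|λₖ - ν_th| + ∑|ν_th - νₖ|`, and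
`ν_th + νₖ ≥ 1` lets one replace `|ν_th - νₖ|` by `|νₖ² - ν_th²|`. Cauchy–Schwarz on the `2m`
terms `λₖ - ν_th` and on the `m` terms `νₖ² - ν_th²`, combined through `(x + y)² ≤ 2x² + 2y²`,
bounds the square of the right-hand side by `m · Δ`. -/

open Matrix

/-- The standard symplectic form Ω = [[Iₘ's 0, I],[−I, 0]] on ℝ^{2m}. -/
noncomputable def Omega (m : ℕ) : Matrix (Fin m ⊕ Fin m) (Fin m ⊕ Fin m) ℝ :=
  Matrix.fromBlocks 0 1 (-1) 0

theorem abs_sub_le_abs_sq_sub_sq_of_one_le_add {a b : ℝ} (h : 1 ≤ a + b) :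
    |a - b| ≤ |a ^ 2 - b ^ 2| := by
  rw [sq_sub_sq, abs_mul, abs_of_pos (by linarith : 0 < a + b)]
  exact le_mul_of_one_le_left (abs_nonneg _) h

theorem sq_sum_abs_le_card_mul_sum_sq {ι : Type*} (s : Finset ι) (f : ι → ℝ) :
    (∑ i ∈ s, |f i|) ^ 2 ≤ s.card * ∑ i ∈ s, f i ^ 2 := by
  simpa only [sq_abs] using sq_sum_le_card_mul_sum_sq (s := s) (f := fun i => |f i|)

theorem half_add_le_sqrt_of_sq_le {x y p q n : ℝ} (hx : x ^ 2 ≤ 2 * n * p) (hy : y ^ 2 ≤ n * q) :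
    x / 2 + y ≤ Real.sqrt (n * (p + 2 * q)) :=
  Real.le_sqrt_of_sq_le (by nlinarith [sq_nonneg (x / 2 - y)])

theorem work_bounded_by_Delta_general (m : ℕ)
    (Γ : Matrix (Fin m ⊕ Fin m) (Fin m ⊕ Fin m) ℝ)
    (hΓ : Γ.IsHermitian)
    (ν : Fin m → ℝ)
    (νth : ℝ) (hsum : ∀ k, 1 ≤ νth + ν k) :
    (1 / 2 : ℝ) * (∑ k, (hΓ.eigenvalues k - νth)) + ∑ k, (νth - ν k)
      ≤ Real.sqrt (m *
          ((∑ k, (hΓ.eigenvalues k - νth) ^ 2) + 2 * ∑ k, (ν k ^ 2 - νth ^ 2) ^ 2)) := by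
  have hEig : ∑ k, (hΓ.eigenvalues k - νth) ≤ ∑ k, |hΓ.eigenvalues k - νth| :=
    Finset.sum_le_sum fun k _ => le_abs_self _
  have hν : ∑ k, (νth - ν k) ≤ ∑ k, |ν k ^ 2 - νth ^ 2| :=
    Finset.sum_le_sum fun k _ => (le_abs_self _).trans <| by
      simpa only [abs_sub_comm] using abs_sub_le_abs_sq_sub_sq_of_one_le_add (hsum k)
  have hcardEig := sq_sum_abs_le_card_mul_sum_sq Finset.univ fun k => hΓ.eigenvalues k - νth
  have hcardν := sq_sum_abs_le_card_mul_sum_sq Finset.univ fun k => ν k ^ 2 - νth ^ 2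
  simp only [Finset.card_univ, Fintype.card_sum, Fintype.card_fin, Nat.cast_add] at hcardEig hcardν
  calc _ ≤ (∑ k, |hΓ.eigenvalues k - νth|) / 2 + ∑ k, |ν k ^ 2 - νth ^ 2| := by linarith
    _ ≤ _ := half_add_le_sqrt_of_sq_le (by linarith) hcardν

/-- For a real symmetric positive-definite 2m×2m matrix Γ with eigenvalues
λ₁,…,λ_{2m} and symplectic eigenvalues ν₁,…,ν_m (the eigenvalues of iΩΓ being ±νₖ),
and ν_th > 0 with ν_th + νₖ ≥ 1 for all k, the Gaussian extractable work
W = (1/2)∑ₖ(λₖ − ν_th) + ∑ₖ(ν_th − νₖ) satisfies W ≤ √(m·Δ) with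
Δ = ∑ₖ(λₖ−ν_th)² + 2∑ₖ(νₖ²−ν_th²)². -/
theorem work_bounded_by_Delta (m : ℕ)
    (Γ : Matrix (Fin m ⊕ Fin m) (Fin m ⊕ Fin m) ℝ)
    (hΓ : Γ.IsHermitian) (hpd : Γ.PosDef)
    (ν : Fin m → ℝ) (hν : ∀ k, 0 < ν k)
    (hroots : ((Complex.I • ((Omega m * Γ).map (fun x : ℝ => (x : ℂ)))).charpoly).roots
      = (Finset.univ.val.map fun k : Fin m => ((ν k : ℝ) : ℂ))
        + (Finset.univ.val.map fun k : Fin m => (-(ν k : ℝ) : ℂ)))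
    (νth : ℝ) (hth : 0 < νth) (hsum : ∀ k, 1 ≤ νth + ν k) :
    (1 / 2 : ℝ) * (∑ k, (hΓ.eigenvalues k - νth)) + ∑ k, (νth - ν k)
      ≤ Real.sqrt (m *
          ((∑ k, (hΓ.eigenvalues k - νth) ^ 2) + 2 * ∑ k, (ν k ^ 2 - νth ^ 2) ^ 2)) :=
  work_bounded_by_Delta_general m Γ hΓ ν νth hsum
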